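/- Let P be a polynomial basis with P = X V and M, O as before. For any polynomial y = P a and x_0 ∈ ℝ, the Volterra-type integral satisfies ∫_{x_0}^{x} P_i(x) P_j(t) y(t) dt = P ((P_i(M) − e_{i+1} P|_{x=x_0}) O P_j(M) a), where e_{i+1} is the (i+1)-th standard basis column vector and P|_{x=x_0} is the row vector (P_0(x_0), P_1(x_0), ...). -/
import Mathlib


open Polynomial Finset

/-- Matrix-vector product of an infinite matrix with a coefficient sequence. -/
noncomputable def matVec (M : ℕ → ℕ → ℝ) (v : ℕ → ℝ) : ℕ → ℝ := fun i => ∑' j, M i j * v j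

/-- Product of infinite matrices (well defined for the row/column finite matrices used here). -/
noncomputable def matMul (A B : ℕ → ℕ → ℝ) : ℕ → ℕ → ℝ := fun i j => ∑' k, A i k * B k j

/-- Powers of an infinite matrix. -/
noncomputable def matPow (M : ℕ → ℕ → ℝ) : ℕ → (ℕ → ℕ → ℝ)
  | 0 => fun i j => if i = j then (1 : ℝ) else 0
  | k + 1 => matMul (matPow M k) M

/-- Shift matrix `M_X` (multiplication by `x` in the power basis). -/
noncomputable def MX : ℕ → ℕ → ℝ := fun r c => if r = c + 1 then (1 : ℝ) else 0

/-- Differentiation matrix `N_X` in the power basis. -/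
noncomputable def NXmat : ℕ → ℕ → ℝ := fun r c => if c = r + 1 then (r + 1 : ℝ) else 0

/-- Integration matrix `O_X` in the power basis. -/
noncomputable def OX : ℕ → ℕ → ℝ := fun r c => if r = c + 1 then (1 : ℝ) / (c + 1) else 0

/-- Evaluation of a (real) polynomial at an infinite matrix. -/
noncomputable def polyEvalMat (p : Polynomial ℝ) (M : ℕ → ℕ → ℝ) : ℕ → ℕ → ℝ :=
  ∑ k ∈ Finset.range (p.natDegree + 1), p.coeff k • matPow M k

/-- Formal antiderivative (with zero constant term) of a polynomial. -/
noncomputable def antider (p : Polynomial ℝ) : Polynomial ℝ :=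
  p.sum fun n c => Polynomial.C (c / (n + 1)) * Polynomial.X ^ (n + 1)

/-- bounded support -/
def Bnd (v : ℕ → ℝ) (n : ℕ) : Prop := ∀ m, n ≤ m → v m = 0
/-- band condition: `A r c = 0` whenever `r > c + d` -/
def Band (A : ℕ → ℕ → ℝ) (d : ℕ) : Prop := ∀ r c, c + d < r → A r c = 0

lemma Bnd.mono {v n m} (h : Bnd v n) (hnm : n ≤ m) : Bnd v m :=
  fun k hk => h k (hnm.trans hk)

lemma Band.mono {A d e} (h : Band A d) (hde : d ≤ e) : Band A e :=
  fun r c hc => h r c (by omega)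

lemma matVec_eq_sum {A : ℕ → ℕ → ℝ} {v : ℕ → ℝ} {n : ℕ} (hv : Bnd v n) (r : ℕ) :
    matVec A v r = ∑ k ∈ range n, A r k * v k := by
  apply tsum_eq_sum
  intro k hk
  rw [hv k (by simpa using hk), mul_zero]

lemma matMul_eq_sum {A B : ℕ → ℕ → ℝ} {e : ℕ} (hB : Band B e) (r c : ℕ) :
    matMul A B r c = ∑ k ∈ range (c + e + 1), A r k * B k c := by
  apply tsum_eq_sum
  intro k hk
  rw [hB k c (by simpa using hk), mul_zero]

lemma Bnd.matVec {A : ℕ → ℕ → ℝ} {v : ℕ → ℝ} {n d : ℕ} (hA : Band A d) (hv : Bnd v n) :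
    Bnd (matVec A v) (n + d) := by
  intro m hm
  rw [matVec_eq_sum hv]
  apply Finset.sum_eq_zero
  intro k hk
  rw [hA m k (by simp at hk; omega), zero_mul]

lemma Band.matMul {A B : ℕ → ℕ → ℝ} {d e : ℕ} (hA : Band A d) (hB : Band B e) :
    Band (matMul A B) (d + e) := by
  intro r c hrc
  rw [matMul_eq_sum hB]
  apply Finset.sum_eq_zero
  intro k hk
  rcases le_or_gt k (c + e) with h | h
  · rw [hA r k (by omega), zero_mul]
  · rw [hB k c (by omega), mul_zero]

lemma matVec_assoc {A B : ℕ → ℕ → ℝ} {v : ℕ → ℝ} {e n : ℕ}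
    (hB : Band B e) (hv : Bnd v n) :
    matVec (matMul A B) v = matVec A (matVec B v) := by
  funext r
  rw [matVec_eq_sum hv, matVec_eq_sum (hv.matVec hB)]
  have : ∀ k ∈ range (n + e), A r k * matVec B v k
      = ∑ m ∈ range n, A r k * (B k m * v m) := by
    intro k _
    rw [matVec_eq_sum hv, Finset.mul_sum]
  rw [Finset.sum_congr rfl this, Finset.sum_comm]
  apply Finset.sum_congr rfl
  intro m hm
  simp only [mem_range] at hm
  rw [matMul_eq_sum hB, Finset.sum_mul]
  have h1 : ∑ k ∈ range (m + e + 1), A r k * B k m * v m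
      = ∑ k ∈ range (n + e), A r k * B k m * v m := by
    apply Finset.sum_subset
    · intro k hk; simp only [mem_range] at *; omega
    · intro k _ hk
      simp only [mem_range, not_lt] at hk
      rw [hB k m (by omega)]
      ring
  rw [h1]
  apply Finset.sum_congr rfl
  intros; ring

lemma matVec_sum_mats {ι : Type*} (s : Finset ι) (A : ι → ℕ → ℕ → ℝ) {v : ℕ → ℝ} {n : ℕ}
    (hv : Bnd v n) (r : ℕ) :
    matVec (∑ k ∈ s, A k) v r = ∑ k ∈ s, matVec (A k) v r := by
  rw [matVec_eq_sum hv]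
  have h : ∀ k ∈ s, matVec (A k) v r = ∑ m ∈ range n, A k r m * v m :=
    fun k _ => matVec_eq_sum hv r
  rw [Finset.sum_congr rfl h, Finset.sum_comm]
  apply Finset.sum_congr rfl
  intro m _
  simp [Finset.sum_apply, Finset.sum_mul]

lemma matVec_smul_mat (c : ℝ) (A : ℕ → ℕ → ℝ) {v : ℕ → ℝ} {n : ℕ} (hv : Bnd v n) (r : ℕ) :
    matVec (c • A) v r = c * matVec A v r := by
  rw [matVec_eq_sum hv, matVec_eq_sum hv, Finset.mul_sum]
  apply Finset.sum_congr rfl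
  intro m _
  simp [mul_assoc]

lemma matVec_sub_mat (A B : ℕ → ℕ → ℝ) {v : ℕ → ℝ} {n : ℕ} (hv : Bnd v n) (r : ℕ) :
    matVec (A - B) v r = matVec A v r - matVec B v r := by
  rw [matVec_eq_sum hv, matVec_eq_sum hv, matVec_eq_sum hv, ← Finset.sum_sub_distrib]
  apply Finset.sum_congr rfl
  intro m _
  simp [sub_mul]

lemma matVec_vec_sum {ι : Type*} (s : Finset ι) (u : ι → ℕ → ℝ) {n : ℕ}
    (hu : ∀ k ∈ s, Bnd (u k) n) (A : ℕ → ℕ → ℝ) (r : ℕ) :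
    matVec A (fun m => ∑ k ∈ s, u k m) r = ∑ k ∈ s, matVec A (u k) r := by
  have hb : Bnd (fun m => ∑ k ∈ s, u k m) n := by
    intro m hm
    exact Finset.sum_eq_zero fun k hk => hu k hk m hm
  rw [matVec_eq_sum hb]
  have h : ∀ k ∈ s, matVec A (u k) r = ∑ m ∈ range n, A r m * u k m :=
    fun k hk => matVec_eq_sum (hu k hk) r
  rw [Finset.sum_congr rfl h, Finset.sum_comm]
  apply Finset.sum_congr rfl
  intro m _
  rw [Finset.mul_sum]

lemma matVec_smul_vec (A : ℕ → ℕ → ℝ) (c : ℝ) {v : ℕ → ℝ} {n : ℕ} (hv : Bnd v n) (r : ℕ) :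
    matVec A (fun m => c * v m) r = c * matVec A v r := by
  have hb : Bnd (fun m => c * v m) n := fun m hm => by simp only []; rw [hv m hm, mul_zero]
  rw [matVec_eq_sum hb, matVec_eq_sum hv, Finset.mul_sum]
  apply Finset.sum_congr rfl
  intro m _
  ring

lemma band_MX : Band MX 1 := by
  intro r c h
  simp only [MX]
  rw [if_neg (by omega)]

lemma band_OX : Band OX 1 := by
  intro r c h
  simp only [OX]
  rw [if_neg (by omega)]

lemma band_matPow {A : ℕ → ℕ → ℝ} {d : ℕ} (hA : Band A d) (k : ℕ) :
    Band (matPow A k) (k * d) := by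
  induction k with
  | zero =>
    intro r c h
    simp only [matPow]
    rw [if_neg (by omega)]
  | succ k ih =>
    have := ih.matMul hA
    intro r c h
    exact this r c (by nlinarith)

lemma band_polyEvalMat {A : ℕ → ℕ → ℝ} (hA : Band A 1) (p : Polynomial ℝ) :
    Band (polyEvalMat p A) p.natDegree := by
  intro r c h
  simp only [polyEvalMat, Finset.sum_apply, Pi.smul_apply, smul_eq_mul]
  apply Finset.sum_eq_zero
  intro k hk
  simp only [mem_range] at hk
  rw [(band_matPow hA k) r c (by omega), mul_zero]

lemma bnd_coeff (p : Polynomial ℝ) : Bnd (fun k => p.coeff k) (p.natDegree + 1) :=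
  fun m hm => p.coeff_eq_zero_of_natDegree_lt (by omega)

lemma matVec_MX_coeff (p : Polynomial ℝ) (r : ℕ) :
    matVec MX (fun k => p.coeff k) r = (X * p).coeff r := by
  cases r with
  | zero =>
    have h0 : matVec MX (fun k => p.coeff k) 0 = ∑ k ∈ (∅ : Finset ℕ), MX 0 k * p.coeff k := by
      apply tsum_eq_sum
      intro k _
      simp [MX]
    rw [h0]
    simp [Polynomial.coeff_mul]
  | succ m =>
    have h1 : matVec MX (fun k => p.coeff k) (m + 1) = MX (m + 1) m * p.coeff m := by
      apply tsum_eq_single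
      intro c hc
      simp only [MX]
      rw [if_neg (by omega), zero_mul]
    rw [h1, Polynomial.coeff_X_mul]
    simp [MX]

lemma matVec_id_vec {v : ℕ → ℝ} (r : ℕ) :
    matVec (fun i j => if i = j then (1 : ℝ) else 0) v r = v r := by
  have h1 : matVec (fun i j => if i = j then (1 : ℝ) else 0) v r
      = (if r = r then (1:ℝ) else 0) * v r := by
    apply tsum_eq_single
    intro c hc
    simp only []
    rw [if_neg (fun h => hc h.symm), zero_mul]
  rw [h1, if_pos rfl, one_mul]

lemma matVec_matPow_MX_coeff (k : ℕ) (p : Polynomial ℝ) (r : ℕ) :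
    matVec (matPow MX k) (fun m => p.coeff m) r = (X ^ k * p).coeff r := by
  induction k generalizing p with
  | zero => simp only [matPow, matVec_id_vec, pow_zero, one_mul]
  | succ k ih =>
    have hassoc := matVec_assoc (A := matPow MX k) band_MX (bnd_coeff p)
    simp only [matPow]
    rw [hassoc]
    have hfun : matVec MX (fun m => p.coeff m) = fun m => (X * p).coeff m :=
      funext (matVec_MX_coeff p)
    rw [hfun, ih (X * p)]
    ring_nf

lemma matVec_polyEvalMat_MX_coeff (q p : Polynomial ℝ) (r : ℕ) :
    matVec (polyEvalMat q MX) (fun m => p.coeff m) r = (q * p).coeff r := by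
  rw [polyEvalMat, matVec_sum_mats _ _ (bnd_coeff p)]
  have h : ∀ k ∈ range (q.natDegree + 1),
      matVec (q.coeff k • matPow MX k) (fun m => p.coeff m) r
        = q.coeff k * (X ^ k * p).coeff r := by
    intro k _
    rw [matVec_smul_mat _ _ (bnd_coeff p), matVec_matPow_MX_coeff]
  rw [Finset.sum_congr rfl h]
  conv_rhs => rw [Polynomial.as_sum_range' q (q.natDegree + 1) (Nat.lt_succ_self _)]
  rw [Finset.sum_mul, Polynomial.finset_sum_coeff]
  apply Finset.sum_congr rfl
  intro k _
  rw [← Polynomial.C_mul_X_pow_eq_monomial, mul_assoc, Polynomial.coeff_C_mul]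

lemma antider_coeff_zero (p : Polynomial ℝ) : (antider p).coeff 0 = 0 := by
  rw [antider, Polynomial.coeff_sum]
  apply Finset.sum_eq_zero
  intro k _
  simp only []
  rw [Polynomial.coeff_C_mul, Polynomial.coeff_X_pow, if_neg (by omega), mul_zero]

lemma antider_coeff_succ (p : Polynomial ℝ) (m : ℕ) :
    (antider p).coeff (m + 1) = p.coeff m / (m + 1 : ℝ) := by
  rw [antider, Polynomial.coeff_sum]
  have h : ∀ k ∈ p.support,
      (Polynomial.C (p.coeff k / (k + 1 : ℝ)) * X ^ (k + 1)).coeff (m + 1)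
        = if k = m then p.coeff k / (k + 1 : ℝ) else 0 := by
    intro k _
    rw [Polynomial.coeff_C_mul, Polynomial.coeff_X_pow]
    by_cases hk : k = m
    · rw [if_pos (by omega), if_pos hk, mul_one]
    · rw [if_neg (by omega), if_neg hk, mul_zero]
  rw [Polynomial.sum_def, Finset.sum_congr rfl h, Finset.sum_ite_eq' p.support m
    (fun k => p.coeff k / (k + 1 : ℝ))]
  by_cases hm : m ∈ p.support
  · rw [if_pos hm]
  · rw [if_neg hm, Polynomial.notMem_support_iff.mp hm, zero_div]

lemma matVec_OX_coeff (p : Polynomial ℝ) (r : ℕ) :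
    matVec OX (fun m => p.coeff m) r = (antider p).coeff r := by
  cases r with
  | zero =>
    have h0 : matVec OX (fun k => p.coeff k) 0 = ∑ k ∈ (∅ : Finset ℕ), OX 0 k * p.coeff k := by
      apply tsum_eq_sum
      intro k _
      simp [OX]
    rw [h0, antider_coeff_zero]
    simp
  | succ m =>
    have h1 : matVec OX (fun k => p.coeff k) (m + 1) = OX (m + 1) m * p.coeff m := by
      apply tsum_eq_single
      intro c hc
      simp only [OX]
      rw [if_neg (by omega), zero_mul]
    rw [h1, antider_coeff_succ]
    simp only [OX, if_pos rfl]
    push_cast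
    ring

section Basis

variable {P : ℕ → Polynomial ℝ} {V W : ℕ → ℕ → ℝ}

lemma band_V (hdeg : ∀ i, (P i).degree = i) (hV : ∀ i j, V i j = (P j).coeff i) :
    Band V 0 := by
  intro r c h
  rw [hV]
  apply Polynomial.coeff_eq_zero_of_degree_lt
  rw [hdeg]
  exact_mod_cast (by omega : c < r)

lemma natDeg_P (hdeg : ∀ i, (P i).degree = i) (c : ℕ) : (P c).natDegree = c :=
  Polynomial.natDegree_eq_of_degree_eq_some (hdeg c)

lemma Vdiag_ne (hdeg : ∀ i, (P i).degree = i) (hV : ∀ i j, V i j = (P j).coeff i) (c : ℕ) :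
    V c c ≠ 0 := by
  rw [hV]
  have hne : P c ≠ 0 := by
    intro h
    have hd := hdeg c
    rw [h, Polynomial.degree_zero] at hd
    exact absurd hd (by simp)
  have : (P c).coeff c = (P c).leadingCoeff := by
    rw [Polynomial.leadingCoeff, natDeg_P hdeg]
  rw [this]
  exact Polynomial.leadingCoeff_ne_zero.mpr hne

lemma band_W (hdeg : ∀ i, (P i).degree = i) (hV : ∀ i j, V i j = (P j).coeff i)
    (hWV : ∀ i j, matMul W V i j = if i = j then 1 else 0) :
    Band W 0 := by
  intro r c
  induction c using Nat.strong_induction_on generalizing r with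
  | _ c ih =>
    intro h
    have h0 := hWV r c
    rw [matMul_eq_sum (band_V hdeg hV), if_neg (by omega)] at h0
    rw [Nat.add_zero] at h0
    rw [Finset.sum_range_succ] at h0
    have hz : ∑ k ∈ range c, W r k * V k c = 0 := by
      apply Finset.sum_eq_zero
      intro k hk
      simp only [mem_range] at hk
      rw [ih k (by omega) r (by omega), zero_mul]
    rw [hz, zero_add] at h0
    exact (mul_eq_zero.mp h0).resolve_right (Vdiag_ne hdeg hV c)

lemma matVec_VW (hdeg : ∀ i, (P i).degree = i) (hV : ∀ i j, V i j = (P j).coeff i)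
    (hWV : ∀ i j, matMul W V i j = if i = j then 1 else 0)
    (hVW : ∀ i j, matMul V W i j = if i = j then 1 else 0)
    {v : ℕ → ℝ} {n : ℕ} (hv : Bnd v n) :
    matVec V (matVec W v) = v := by
  rw [← matVec_assoc (band_W hdeg hV hWV) hv]
  funext r
  rw [matVec_eq_sum hv]
  have h : ∀ k ∈ range n, matMul V W r k * v k = (if r = k then 1 else 0) * v k := by
    intro k _
    rw [hVW]
  rw [Finset.sum_congr rfl h]
  simp only [ite_mul, one_mul, zero_mul]
  rw [Finset.sum_ite_eq]
  by_cases hr : r ∈ range n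
  · rw [if_pos hr]
  · rw [if_neg hr]
    simp only [mem_range, not_lt] at hr
    exact (hv r hr).symm

/-- conjugation: if `A = W · AX · V` then `V (A v) = AX (V v)` for bounded `v`. -/
lemma matVec_conj (hdeg : ∀ i, (P i).degree = i) (hV : ∀ i j, V i j = (P j).coeff i)
    (hWV : ∀ i j, matMul W V i j = if i = j then 1 else 0)
    (hVW : ∀ i j, matMul V W i j = if i = j then 1 else 0)
    {AX : ℕ → ℕ → ℝ} (hAX : Band AX 1)
    {v : ℕ → ℝ} {n : ℕ} (hv : Bnd v n) :
    matVec V (matVec (matMul (matMul W AX) V) v) = matVec AX (matVec V v) := by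
  have hVv : Bnd (matVec V v) n := by
    have := hv.matVec (band_V hdeg hV)
    simpa using this
  rw [matVec_assoc (band_V hdeg hV) hv, matVec_assoc hAX hVv]
  exact matVec_VW hdeg hV hWV hVW (hVv.matVec hAX)

end Basis

lemma matVec_vec_sub (A : ℕ → ℕ → ℝ) {u v : ℕ → ℝ} {n : ℕ}
    (hu : Bnd u n) (hv : Bnd v n) (r : ℕ) :
    matVec A (fun m => u m - v m) r = matVec A u r - matVec A v r := by
  have hb : Bnd (fun m => u m - v m) n := by
    intro m hm
    simp only []
    rw [hu m hm, hv m hm, sub_zero]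
  rw [matVec_eq_sum hb, matVec_eq_sum hu, matVec_eq_sum hv, ← Finset.sum_sub_distrib]
  apply Finset.sum_congr rfl
  intro m _
  ring

lemma Band.sub {A B : ℕ → ℕ → ℝ} {d : ℕ} (hA : Band A d) (hB : Band B d) :
    Band (A - B) d := by
  intro r c h
  simp only [Pi.sub_apply]
  rw [hA r c h, hB r c h, sub_zero]

lemma matVec_conj_pow {V A AX : ℕ → ℕ → ℝ} (hVb : Band V 0) (hA : Band A 1) (hAX : Band AX 1)
    (hconj : ∀ (v : ℕ → ℝ) (n : ℕ), Bnd v n → matVec V (matVec A v) = matVec AX (matVec V v))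
    (k : ℕ) {v : ℕ → ℝ} {n : ℕ} (hv : Bnd v n) :
    matVec V (matVec (matPow A k) v) = matVec (matPow AX k) (matVec V v) := by
  induction k generalizing v n with
  | zero =>
    simp only [matPow]
    rw [funext (matVec_id_vec (v := v)), funext (matVec_id_vec (v := matVec V v))]
  | succ k ih =>
    have hVv : Bnd (matVec V v) n := by simpa using hv.matVec hVb
    have hAv : Bnd (matVec A v) (n + 1) := hv.matVec hA
    simp only [matPow]
    rw [matVec_assoc hA hv, ih hAv, hconj v n hv, ← matVec_assoc hAX hVv]

lemma matVec_conj_poly {V A AX : ℕ → ℕ → ℝ} (hVb : Band V 0) (hA : Band A 1) (hAX : Band AX 1)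
    (hconj : ∀ (v : ℕ → ℝ) (n : ℕ), Bnd v n → matVec V (matVec A v) = matVec AX (matVec V v))
    (q : Polynomial ℝ) {v : ℕ → ℝ} {n : ℕ} (hv : Bnd v n) :
    matVec V (matVec (polyEvalMat q A) v) = matVec (polyEvalMat q AX) (matVec V v) := by
  have hVv : Bnd (matVec V v) n := by simpa using hv.matVec hVb
  have bpow : ∀ k, Band (matPow A k) k :=
    fun k => Band.mono (band_matPow hA k) (le_of_eq (mul_one k))
  have hin : matVec (polyEvalMat q A) v
      = fun m => ∑ k ∈ range (q.natDegree + 1), q.coeff k * matVec (matPow A k) v m := by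
    funext m
    rw [polyEvalMat, matVec_sum_mats _ _ hv]
    exact Finset.sum_congr rfl fun k _ => matVec_smul_mat _ _ hv m
  rw [hin]
  funext r
  have hu : ∀ k ∈ range (q.natDegree + 1),
      Bnd (fun m => q.coeff k * matVec (matPow A k) v m) (n + q.natDegree) := by
    intro k hk m hm
    simp only [mem_range] at hk
    simp only []
    rw [(hv.matVec (bpow k)) m (by omega), mul_zero]
  rw [matVec_vec_sum _ _ hu V r]
  have hterm : ∀ k ∈ range (q.natDegree + 1),
      matVec V (fun m => q.coeff k * matVec (matPow A k) v m) r
        = q.coeff k * matVec (matPow AX k) (matVec V v) r := by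
    intro k hk
    rw [matVec_smul_vec V _ (hv.matVec (bpow k)) r,
      matVec_conj_pow hVb hA hAX hconj k hv]
  rw [Finset.sum_congr rfl hterm, polyEvalMat, matVec_sum_mats _ _ hVv]
  exact (Finset.sum_congr rfl fun k _ => matVec_smul_mat _ _ hVv r).symm


lemma coeff_basis_sum {P : ℕ → Polynomial ℝ} {V : ℕ → ℕ → ℝ}
    (hV : ∀ i j, V i j = (P j).coeff i)
    {v : ℕ → ℝ} {N : ℕ} (hv : Bnd v N) (r : ℕ) :
    (∑ k ∈ range N, v k • P k).coeff r = matVec V v r := by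
  rw [matVec_eq_sum hv, Polynomial.finset_sum_coeff]
  apply Finset.sum_congr rfl
  intro k _
  rw [Polynomial.coeff_smul, hV, smul_eq_mul, mul_comm]

/-- Volterra-type integral:
`∫_{x_0}^{x} P_i(x) P_j(t) y(t) dt = P ((P_i(M) − e_{i+1} P|_{x=x_0}) O P_j(M) a)`. -/
theorem volterra_in_basis
    (P : ℕ → Polynomial ℝ) (hdeg : ∀ i, (P i).degree = i)
    (V : ℕ → ℕ → ℝ) (hV : ∀ i j, V i j = (P j).coeff i)
    (W : ℕ → ℕ → ℝ)
    (hWV : ∀ i j, matMul W V i j = if i = j then 1 else 0)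
    (hVW : ∀ i j, matMul V W i j = if i = j then 1 else 0)
    (M : ℕ → ℕ → ℝ) (hM : M = matMul (matMul W MX) V)
    (O : ℕ → ℕ → ℝ) (hO : O = matMul (matMul W OX) V)
    (i j : ℕ) (x0 : ℝ)
    -- the rank-one outer product `e_{i+1} P|_{x=x_0}` (0-indexed row `i`)
    (E : ℕ → ℕ → ℝ) (hE : ∀ r c, E r c = if r = i then (P c).eval x0 else 0)
    (a : ℕ → ℝ) (n : ℕ) (ha : ∀ m, n ≤ m → a m = 0) :
    P i * (antider (P j * (∑ m ∈ Finset.range n, a m • P m)) -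
        Polynomial.C ((antider (P j * (∑ m ∈ Finset.range n, a m • P m))).eval x0)) =
      ∑ k ∈ Finset.range (i + j + n + 2),
        matVec (matMul (matMul (polyEvalMat (P i) M - E) O) (polyEvalMat (P j) M)) a k • P k := by

  set y := ∑ m ∈ Finset.range n, a m • P m with hy
  set g := antider (P j * y) with hg
  set s := g.eval x0 with hs0
  have bV : Band V 0 := band_V hdeg hV
  have bW : Band W 0 := band_W hdeg hV hWV
  have bM : Band M 1 := by
    rw [hM]; exact Band.mono ((bW.matMul band_MX).matMul bV) (by omega)
  have bO : Band O 1 := by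
    rw [hO]; exact Band.mono ((bW.matMul band_OX).matMul bV) (by omega)
  have hconjM : ∀ (v : ℕ → ℝ) (m : ℕ), Bnd v m →
      matVec V (matVec M v) = matVec MX (matVec V v) := by
    intro v m hv
    rw [hM]
    exact matVec_conj hdeg hV hWV hVW band_MX hv
  have hconjO : ∀ (v : ℕ → ℝ) (m : ℕ), Bnd v m →
      matVec V (matVec O v) = matVec OX (matVec V v) := by
    intro v m hv
    rw [hO]
    exact matVec_conj hdeg hV hWV hVW band_OX hv
  have hconjM' : ∀ (v : ℕ → ℝ) (m : ℕ), Bnd v m →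
      matVec V (matVec M v) = matVec MX (matVec V v) := hconjM
  have ha' : Bnd a n := ha
  have bPEj : Band (polyEvalMat (P j) M) j := by
    have := band_polyEvalMat bM (P j)
    rwa [natDeg_P hdeg] at this
  have bPEi : Band (polyEvalMat (P i) M) i := by
    have := band_polyEvalMat bM (P i)
    rwa [natDeg_P hdeg] at this
  have bE : Band E i := by
    intro r c h
    rw [hE, if_neg (by omega)]
  set u := matVec (polyEvalMat (P j) M) a with hu
  set w := matVec O u with hw
  have hu_b : Bnd u (n + j) := ha'.matVec bPEj
  have hw_b : Bnd w (n + j + 1) := hu_b.matVec bO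
  set d := matVec (polyEvalMat (P i) M - E) w with hd
  have hd_b : Bnd d (n + j + 1 + i) := hw_b.matVec (bPEi.sub bE)
  have hflat : matVec (matMul (matMul (polyEvalMat (P i) M - E) O) (polyEvalMat (P j) M)) a
      = d := by
    rw [matVec_assoc bPEj ha', matVec_assoc bO hu_b]
  -- coefficient vectors
  have hcy : matVec V a = fun r => y.coeff r :=
    funext fun r => (coeff_basis_sum hV ha' r).symm
  have hVu : matVec V u = fun r => (P j * y).coeff r := by
    rw [hu, matVec_conj_poly bV bM band_MX (fun v m hv => hconjM v m hv) (P j) ha', hcy]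
    exact funext fun r => matVec_polyEvalMat_MX_coeff (P j) y r
  have hVw : matVec V w = fun r => g.coeff r := by
    rw [hw, hconjO u (n + j) hu_b, hVu]
    exact funext fun r => matVec_OX_coeff (P j * y) r
  -- g as a basis sum and evaluation at x0
  have hgsum : g = ∑ c ∈ range (n + j + 1), w c • P c := by
    apply Polynomial.ext
    intro r
    rw [coeff_basis_sum hV hw_b r, ← congrFun hVw r]
  have hsval : s = ∑ c ∈ range (n + j + 1), w c * (P c).eval x0 := by
    rw [hs0, hgsum, Polynomial.eval_finset_sum]
    apply Finset.sum_congr rfl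
    intro c _
    rw [Polynomial.smul_eq_C_mul, Polynomial.eval_mul, Polynomial.eval_C]
  have hEw : matVec E w = fun m => if m = i then s else 0 := by
    funext m
    by_cases hm : m = i
    · subst hm
      rw [matVec_eq_sum hw_b, if_pos rfl, hsval]
      apply Finset.sum_congr rfl
      intro c _
      rw [hE, if_pos rfl]
      ring
    · rw [if_neg hm]
      have hz : (fun c => E m c * w c) = fun _ => 0 :=
        funext fun c => by rw [hE, if_neg hm, zero_mul]
      simp only [matVec]
      rw [hz, tsum_zero]
  have hVEw : matVec V (matVec E w) = fun r => (P i * Polynomial.C s).coeff r := by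
    rw [hEw]
    funext r
    have h1 : matVec V (fun m => if m = i then s else 0) r
        = V r i * (if i = i then s else 0) :=
      tsum_eq_single i fun c hc => by show V r c * (if c = i then s else 0) = 0; rw [if_neg hc, mul_zero]
    rw [h1, if_pos rfl, hV, Polynomial.coeff_mul_C]
  -- the key coefficient identity
  have hVd : matVec V d = fun r => (P i * (g - Polynomial.C s)).coeff r := by
    have hd' : d = fun m => matVec (polyEvalMat (P i) M) w m - matVec E w m :=
      funext fun m => matVec_sub_mat _ _ hw_b m
    have b1 : Bnd (matVec (polyEvalMat (P i) M) w) (n + j + 1 + i + 1) :=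
      (hw_b.matVec bPEi).mono (by omega)
    have b2 : Bnd (matVec E w) (n + j + 1 + i + 1) := by
      rw [hEw]
      intro m hm
      simp only []
      rw [if_neg (by omega)]
    funext r
    rw [hd', matVec_vec_sub V b1 b2 r,
      matVec_conj_poly bV bM band_MX (fun v m hv => hconjM v m hv) (P i) hw_b, hVw,
      congrFun hVEw r]
    have h2 : matVec (polyEvalMat (P i) MX) (fun m => g.coeff m) r = (P i * g).coeff r :=
      matVec_polyEvalMat_MX_coeff (P i) g r
    rw [h2, mul_sub, Polynomial.coeff_sub]
  -- finish
  apply Polynomial.ext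
  intro r
  rw [hflat, coeff_basis_sum hV (hd_b.mono (by omega)) r, hVd]
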